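/- If N is a β-normal term of the sorted target calculus, then its inverse translation N⁻¹ into the CCV λμ-calculus is quasi-normal, i.e., N⁻¹ contains no redex of the administrative or β-type rules (ad₁, ad₂, β_λ, β_let, β_μ, β_jmp); only η-type redices may remain. -/

import Mathlib

/-! ## Syntax of the CCV λμ-calculus -/

mutual
/-- Terms of the CCV λμ-calculus. `lett L x M` denotes the let-binding `L[x := M]`. -/
inductive Tm : Type
  | var : ℕ → Tm
  | lam : ℕ → Tm → Tm
  | app : Tm → Tm → Tm
  | lett : Tm → ℕ → Tm → Tm
  | mu : ℕ → Jp → Tm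
  deriving DecidableEq
/-- Jumps of the CCV λμ-calculus. `lett J x M` denotes `J[x := M]`. -/
inductive Jp : Type
  | jmp : ℕ → Tm → Jp
  | lett : Jp → ℕ → Tm → Jp
  deriving DecidableEq
end

/-- Values: variables and λ-abstractions. -/
def Tm.isVal : Tm → Prop
  | .var _ => True
  | .lam _ _ => True
  | _ => False

instance (M : Tm) : Decidable M.isVal :=
  match M with
  | .var _ => .isTrue trivial
  | .lam _ _ => .isTrue trivial
  | .app _ _ => .isFalse (fun h => h)
  | .lett _ _ _ => .isFalse (fun h => h)
  | .mu _ _ => .isFalse (fun h => h)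

mutual
/-- Free ordinary variables of a term. -/
def fvTm : Tm → Finset ℕ
  | .var x => {x}
  | .lam x M => fvTm M \ {x}
  | .app M N => fvTm M ∪ fvTm N
  | .lett L x M => (fvTm L \ {x}) ∪ fvTm M
  | .mu _ J => fvJp J
/-- Free ordinary variables of a jump. -/
def fvJp : Jp → Finset ℕ
  | .jmp _ M => fvTm M
  | .lett J x M => (fvJp J \ {x}) ∪ fvTm M
end

mutual
/-- Free continuation variables of a term. -/
def fkTm : Tm → Finset ℕ
  | .var _ => ∅
  | .lam _ M => fkTm M
  | .app M N => fkTm M ∪ fkTm N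
  | .lett L _ M => fkTm L ∪ fkTm M
  | .mu k J => fkJp J \ {k}
/-- Free continuation variables of a jump. -/
def fkJp : Jp → Finset ℕ
  | .jmp k M => insert k (fkTm M)
  | .lett J _ M => fkJp J ∪ fkTm M
end

mutual
/-- Substitution of the term `V` for the ordinary variable `x`. -/
def substTm (x : ℕ) (V : Tm) : Tm → Tm
  | .var y => if y = x then V else .var y
  | .lam y M => if y = x then .lam y M else .lam y (substTm x V M)
  | .app M N => .app (substTm x V M) (substTm x V N)
  | .lett L y M => .lett (if y = x then L else substTm x V L) y (substTm x V M)
  | .mu k J => .mu k (substJp x V J)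
def substJp (x : ℕ) (V : Tm) : Jp → Jp
  | .jmp k M => .jmp k (substTm x V M)
  | .lett J y M => .lett (if y = x then J else substJp x V J) y (substTm x V M)
end

mutual
/-- Structural substitution `{[k]□ ↦ [k](M[x := □])}`, applied recursively. -/
def ssubTm (k x : ℕ) (M : Tm) : Tm → Tm
  | .var y => .var y
  | .lam y N => .lam y (ssubTm k x M N)
  | .app N P => .app (ssubTm k x M N) (ssubTm k x M P)
  | .lett L y N => .lett (ssubTm k x M L) y (ssubTm k x M N)
  | .mu l J => if l = k then .mu l J else .mu l (ssubJp k x M J)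
def ssubJp (k x : ℕ) (M : Tm) : Jp → Jp
  | .jmp l N => if l = k then .jmp k (.lett M x (ssubTm k x M N))
                else .jmp l (ssubTm k x M N)
  | .lett J y N => .lett (ssubJp k x M J) y (ssubTm k x M N)
end

mutual
/-- Renaming of the continuation variable `k` by `l`: `{[k]□ ↦ [l]□}`. -/
def renTm (k l : ℕ) : Tm → Tm
  | .var y => .var y
  | .lam y N => .lam y (renTm k l N)
  | .app N P => .app (renTm k l N) (renTm k l P)
  | .lett L y N => .lett (renTm k l L) y (renTm k l N)
  | .mu m J => if m = k then .mu m J else .mu m (renJp k l J)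
def renJp (k l : ℕ) : Jp → Jp
  | .jmp m N => if m = k then .jmp l (renTm k l N) else .jmp m (renTm k l N)
  | .lett J y N => .lett (renJp k l J) y (renTm k l N)
end

/-! ## Identification of terms: the equality axioms -/

mutual
/-- The congruence generated by the three equality axioms (let-associativity,
    μ/let commutation, jumper/let commutation). -/
inductive SEqTm : Tm → Tm → Prop
  | refl (M) : SEqTm M M
  | symm : SEqTm M N → SEqTm N M
  | trans : SEqTm M N → SEqTm N P → SEqTm M P
  | assoc (L : Tm) (x : ℕ) (M : Tm) (y : ℕ) (N : Tm) (h : y ∉ fvTm L) :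
      SEqTm (.lett L x (.lett M y N)) (.lett (.lett L x M) y N)
  | muLet (k : ℕ) (J : Jp) (x : ℕ) (M : Tm) (h : k ∉ fkTm M) :
      SEqTm (.lett (.mu k J) x M) (.mu k (.lett J x M))
  | lam : SEqTm M M' → SEqTm (.lam x M) (.lam x M')
  | app : SEqTm M M' → SEqTm N N' → SEqTm (.app M N) (.app M' N')
  | lett : SEqTm L L' → SEqTm M M' → SEqTm (.lett L x M) (.lett L' x M')
  | mu : SEqJp J J' → SEqTm (.mu k J) (.mu k J')
inductive SEqJp : Jp → Jp → Prop
  | refl (J) : SEqJp J J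
  | symm : SEqJp J J' → SEqJp J' J
  | trans : SEqJp J J' → SEqJp J' J'' → SEqJp J J''
  | jmpLet (k : ℕ) (L : Tm) (x : ℕ) (M : Tm) :
      SEqJp (.jmp k (.lett L x M)) (.lett (.jmp k L) x M)
  | assoc (J : Jp) (x : ℕ) (M : Tm) (y : ℕ) (N : Tm) (h : y ∉ fvJp J) :
      SEqJp (.lett J x (.lett M y N)) (.lett (.lett J x M) y N)
  | jmp : SEqTm M M' → SEqJp (.jmp k M) (.jmp k M')
  | lett : SEqJp J J' → SEqTm M M' → SEqJp (.lett J x M) (.lett J' x M')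
end

/-! ## Reduction rules -/

/-- Root reduction steps on terms, tagged by the rules of the CCV λμ-calculus. -/
inductive RootTm : Tm → Tm → Prop
  | ad1 (N M : Tm) (z : ℕ) (hN : ¬ N.isVal) (hz : z ∉ fvTm N ∪ fvTm M) :
      RootTm (.app N M) (.lett (.app (.var z) M) z N)
  | ad2 (V N : Tm) (z : ℕ) (hV : V.isVal) (hN : ¬ N.isVal) (hz : z ∉ fvTm V ∪ fvTm N) :
      RootTm (.app V N) (.lett (.app V (.var z)) z N)
  | beta_lam (x : ℕ) (M V : Tm) (hV : V.isVal) :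
      RootTm (.app (.lam x M) V) (.lett M x V)
  | beta_let (M : Tm) (x : ℕ) (V : Tm) (hV : V.isVal) :
      RootTm (.lett M x V) (substTm x V M)
  | beta_mu (M : Tm) (x k : ℕ) (J : Jp) (hk : k ∉ fkTm M) :
      RootTm (.lett M x (.mu k J)) (.mu k (ssubJp k x M J))
  | eta_lam (x : ℕ) (V : Tm) (hV : V.isVal) (hx : x ∉ fvTm V) :
      RootTm (.lam x (.app V (.var x))) V
  | eta_let (x : ℕ) (M : Tm) : RootTm (.lett (.var x) x M) M
  | eta_mu (k : ℕ) (M : Tm) (hk : k ∉ fkTm M) :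
      RootTm (.mu k (.jmp k M)) M

/-- Root reduction steps on jumps (rule β_jmp). -/
inductive RootJp : Jp → Jp → Prop
  | beta_jmp (l k : ℕ) (J : Jp) : RootJp (.jmp l (.mu k J)) (renJp k l J)

/-- The administrative root steps (rules ad₁ and ad₂). -/
inductive AdmRootTm : Tm → Tm → Prop
  | ad1 (N M : Tm) (z : ℕ) (hN : ¬ N.isVal) (hz : z ∉ fvTm N ∪ fvTm M) :
      AdmRootTm (.app N M) (.lett (.app (.var z) M) z N)
  | ad2 (V N : Tm) (z : ℕ) (hV : V.isVal) (hN : ¬ N.isVal) (hz : z ∉ fvTm V ∪ fvTm N) :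
      AdmRootTm (.app V N) (.lett (.app V (.var z)) z N)

/-- The non-administrative ("practical") root steps on terms. -/
inductive PracRootTm : Tm → Tm → Prop
  | beta_lam (x : ℕ) (M V : Tm) (hV : V.isVal) :
      PracRootTm (.app (.lam x M) V) (.lett M x V)
  | beta_let (M : Tm) (x : ℕ) (V : Tm) (hV : V.isVal) :
      PracRootTm (.lett M x V) (substTm x V M)
  | beta_mu (M : Tm) (x k : ℕ) (J : Jp) (hk : k ∉ fkTm M) :
      PracRootTm (.lett M x (.mu k J)) (.mu k (ssubJp k x M J))
  | eta_lam (x : ℕ) (V : Tm) (hV : V.isVal) (hx : x ∉ fvTm V) :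
      PracRootTm (.lam x (.app V (.var x))) V
  | eta_let (x : ℕ) (M : Tm) : PracRootTm (.lett (.var x) x M) M
  | eta_mu (k : ℕ) (M : Tm) (hk : k ∉ fkTm M) :
      PracRootTm (.mu k (.jmp k M)) M

/-- The vertical root step (rule η_μ). -/
inductive VertRootTm : Tm → Tm → Prop
  | eta_mu (k : ℕ) (M : Tm) (hk : k ∉ fkTm M) :
      VertRootTm (.mu k (.jmp k M)) M

/-- The β-type root steps (non-η rules): ad₁, ad₂, β_λ, β_let, β_μ. -/
inductive QRootTm : Tm → Tm → Prop
  | ad1 (N M : Tm) (z : ℕ) (hN : ¬ N.isVal) (hz : z ∉ fvTm N ∪ fvTm M) :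
      QRootTm (.app N M) (.lett (.app (.var z) M) z N)
  | ad2 (V N : Tm) (z : ℕ) (hV : V.isVal) (hN : ¬ N.isVal) (hz : z ∉ fvTm V ∪ fvTm N) :
      QRootTm (.app V N) (.lett (.app V (.var z)) z N)
  | beta_lam (x : ℕ) (M V : Tm) (hV : V.isVal) :
      QRootTm (.app (.lam x M) V) (.lett M x V)
  | beta_let (M : Tm) (x : ℕ) (V : Tm) (hV : V.isVal) :
      QRootTm (.lett M x V) (substTm x V M)
  | beta_mu (M : Tm) (x k : ℕ) (J : Jp) (hk : k ∉ fkTm M) :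
      QRootTm (.lett M x (.mu k J)) (.mu k (ssubJp k x M J))

/-- The η-type root steps: η_λ, η_let, η_μ. -/
inductive EtaRootTm : Tm → Tm → Prop
  | eta_lam (x : ℕ) (V : Tm) (hV : V.isVal) (hx : x ∉ fvTm V) :
      EtaRootTm (.lam x (.app V (.var x))) V
  | eta_let (x : ℕ) (M : Tm) : EtaRootTm (.lett (.var x) x M) M
  | eta_mu (k : ℕ) (M : Tm) (hk : k ∉ fkTm M) :
      EtaRootTm (.mu k (.jmp k M)) M

/-- The empty root relation on jumps. -/
def NoRootJp : Jp → Jp → Prop := fun _ _ => False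

mutual
/-- Closure of root relations under all term/jump contexts (terms). -/
inductive CtxTm (R : Tm → Tm → Prop) (RJ : Jp → Jp → Prop) : Tm → Tm → Prop
  | root : R M M' → CtxTm R RJ M M'
  | lam : CtxTm R RJ M M' → CtxTm R RJ (.lam x M) (.lam x M')
  | appL : CtxTm R RJ M M' → CtxTm R RJ (.app M N) (.app M' N)
  | appR : CtxTm R RJ N N' → CtxTm R RJ (.app M N) (.app M N')
  | lettL : CtxTm R RJ L L' → CtxTm R RJ (.lett L x M) (.lett L' x M)
  | lettR : CtxTm R RJ M M' → CtxTm R RJ (.lett L x M) (.lett L x M')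
  | mu : CtxJp R RJ J J' → CtxTm R RJ (.mu k J) (.mu k J')
/-- Closure of root relations under all term/jump contexts (jumps). -/
inductive CtxJp (R : Tm → Tm → Prop) (RJ : Jp → Jp → Prop) : Jp → Jp → Prop
  | root : RJ J J' → CtxJp R RJ J J'
  | jmp : CtxTm R RJ M M' → CtxJp R RJ (.jmp k M) (.jmp k M')
  | lettL : CtxJp R RJ J J' → CtxJp R RJ (.lett J x M) (.lett J' x M)
  | lettR : CtxTm R RJ M M' → CtxJp R RJ (.lett J x M) (.lett J x M')
end

/-- One full reduction step of the CCV λμ-calculus on terms. -/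
def StepTm : Tm → Tm → Prop := CtxTm RootTm RootJp
/-- One full reduction step of the CCV λμ-calculus on jumps. -/
def StepJp : Jp → Jp → Prop := CtxJp RootTm RootJp
/-- One vertical reduction step (η_μ at any position). -/
def VStepTm : Tm → Tm → Prop := CtxTm VertRootTm NoRootJp
/-- One administrative reduction step. -/
def AStepTm : Tm → Tm → Prop := CtxTm AdmRootTm NoRootJp
/-- One practical (non-administrative) reduction step. -/
def PStepTm : Tm → Tm → Prop := CtxTm PracRootTm RootJp
def PStepJp : Jp → Jp → Prop := CtxJp PracRootTm RootJp
/-- One β-type (non-η) reduction step. -/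
def QStepTm : Tm → Tm → Prop := CtxTm QRootTm RootJp
/-- One η-type reduction step. -/
def EStepTm : Tm → Tm → Prop := CtxTm EtaRootTm NoRootJp

/-- A step of the relation `S`, performed modulo the identification of terms
    by the equality axioms. -/
def MStep (S : Tm → Tm → Prop) (M N : Tm) : Prop :=
  ∃ M' N', SEqTm M M' ∧ S M' N' ∧ SEqTm N' N
def MStepJ (S : Jp → Jp → Prop) (J J' : Jp) : Prop :=
  ∃ J₁ J₂, SEqJp J J₁ ∧ S J₁ J₂ ∧ SEqJp J₂ J'

/-- CCV equality: the congruence generated by the reduction rules (and the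
    identification of terms). -/
def CcvEq : Tm → Tm → Prop :=
  Relation.EqvGen (fun M N => StepTm M N ∨ SEqTm M N)

/-! ## The sorted target calculus: T ::= λk.Q | WW; Q ::= KW | TK;
    W ::= x | λx.T; K ::= k | λx.Q -/

mutual
inductive TT : Type
  | lamK : ℕ → QT → TT
  | app : WT → WT → TT
  deriving DecidableEq
inductive QT : Type
  | kw : KT → WT → QT
  | tk : TT → KT → QT
  deriving DecidableEq
inductive WT : Type
  | var : ℕ → WT
  | lam : ℕ → TT → WT
  deriving DecidableEq
inductive KT : Type
  | kvar : ℕ → KT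
  | lamQ : ℕ → QT → KT
  deriving DecidableEq
end

mutual
/-- Free ordinary variables. -/
def fvT : TT → Finset ℕ
  | .lamK _ q => fvQ q
  | .app w1 w2 => fvW w1 ∪ fvW w2
def fvQ : QT → Finset ℕ
  | .kw K w => fvK K ∪ fvW w
  | .tk t K => fvT t ∪ fvK K
def fvW : WT → Finset ℕ
  | .var x => {x}
  | .lam x t => fvT t \ {x}
def fvK : KT → Finset ℕ
  | .kvar _ => ∅
  | .lamQ x q => fvQ q \ {x}
end

mutual
/-- Free continuation variables. -/
def fkT : TT → Finset ℕ
  | .lamK k q => fkQ q \ {k}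
  | .app w1 w2 => fkW w1 ∪ fkW w2
def fkQ : QT → Finset ℕ
  | .kw K w => fkK K ∪ fkW w
  | .tk t K => fkT t ∪ fkK K
def fkW : WT → Finset ℕ
  | .var _ => ∅
  | .lam _ t => fkT t
def fkK : KT → Finset ℕ
  | .kvar k => {k}
  | .lamQ _ q => fkQ q
end

mutual
/-- Substitution of a sort-W term for an ordinary variable. -/
def wsubT (x : ℕ) (w : WT) : TT → TT
  | .lamK k q => .lamK k (wsubQ x w q)
  | .app w1 w2 => .app (wsubW x w w1) (wsubW x w w2)
def wsubQ (x : ℕ) (w : WT) : QT → QT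
  | .kw K w' => .kw (wsubK x w K) (wsubW x w w')
  | .tk t K => .tk (wsubT x w t) (wsubK x w K)
def wsubW (x : ℕ) (w : WT) : WT → WT
  | .var y => if y = x then w else .var y
  | .lam y t => if y = x then .lam y t else .lam y (wsubT x w t)
def wsubK (x : ℕ) (w : WT) : KT → KT
  | .kvar k => .kvar k
  | .lamQ y q => if y = x then .lamQ y q else .lamQ y (wsubQ x w q)
end

mutual
/-- Substitution of a sort-K term for a continuation variable. -/
def ksubT (k : ℕ) (K0 : KT) : TT → TT
  | .lamK l q => if l = k then .lamK l q else .lamK l (ksubQ k K0 q)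
  | .app w1 w2 => .app (ksubW k K0 w1) (ksubW k K0 w2)
def ksubQ (k : ℕ) (K0 : KT) : QT → QT
  | .kw K w => .kw (ksubK k K0 K) (ksubW k K0 w)
  | .tk t K => .tk (ksubT k K0 t) (ksubK k K0 K)
def ksubW (k : ℕ) (K0 : KT) : WT → WT
  | .var y => .var y
  | .lam y t => .lam y (ksubT k K0 t)
def ksubK (k : ℕ) (K0 : KT) : KT → KT
  | .kvar l => if l = k then K0 else .kvar l
  | .lamQ y q => .lamQ y (ksubQ k K0 q)
end

/-! β and η root reductions of the (sorted) target calculus -/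

inductive BetaRootT : TT → TT → Prop
  | beta (x : ℕ) (t : TT) (w : WT) : BetaRootT (.app (.lam x t) w) (wsubT x w t)

inductive BetaRootQ : QT → QT → Prop
  | betaK (x : ℕ) (q : QT) (w : WT) : BetaRootQ (.kw (.lamQ x q) w) (wsubQ x w q)
  | betaT (k : ℕ) (q : QT) (K : KT) : BetaRootQ (.tk (.lamK k q) K) (ksubQ k K q)

inductive EtaRootT : TT → TT → Prop
  | eta (k : ℕ) (t : TT) (h : k ∉ fkT t) : EtaRootT (.lamK k (.tk t (.kvar k))) t

inductive EtaRootW : WT → WT → Prop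
  | eta (x : ℕ) (w : WT) (h : x ∉ fvW w) : EtaRootW (.lam x (.app w (.var x))) w

inductive EtaRootK : KT → KT → Prop
  | eta (x : ℕ) (K : KT) (h : x ∉ fvK K) : EtaRootK (.lamQ x (.kw K (.var x))) K

section
variable (RT : TT → TT → Prop) (RQ : QT → QT → Prop)
  (RW : WT → WT → Prop) (RK : KT → KT → Prop)

mutual
/-- Context closure, sort T. -/
inductive CtxT : TT → TT → Prop
  | root : RT t t' → CtxT t t'
  | lamK : CtxQ q q' → CtxT (.lamK k q) (.lamK k q')
  | appL : CtxW w w' → CtxT (.app w v) (.app w' v)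
  | appR : CtxW v v' → CtxT (.app w v) (.app w v')
/-- Context closure, sort Q. -/
inductive CtxQ : QT → QT → Prop
  | root : RQ q q' → CtxQ q q'
  | kwL : CtxK K K' → CtxQ (.kw K w) (.kw K' w)
  | kwR : CtxW w w' → CtxQ (.kw K w) (.kw K w')
  | tkL : CtxT t t' → CtxQ (.tk t K) (.tk t' K)
  | tkR : CtxK K K' → CtxQ (.tk t K) (.tk t K')
/-- Context closure, sort W. -/
inductive CtxW : WT → WT → Prop
  | root : RW w w' → CtxW w w'
  | lam : CtxT t t' → CtxW (.lam x t) (.lam x t')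
/-- Context closure, sort K. -/
inductive CtxK : KT → KT → Prop
  | root : RK K K' → CtxK K K'
  | lamQ : CtxQ q q' → CtxK (.lamQ x q) (.lamQ x q')
end

end

def NoT : TT → TT → Prop := fun _ _ => False
def NoQ : QT → QT → Prop := fun _ _ => False
def NoW : WT → WT → Prop := fun _ _ => False
def NoK : KT → KT → Prop := fun _ _ => False

/-- One β-reduction step, per sort. -/
def BStepT : TT → TT → Prop := CtxT BetaRootT BetaRootQ NoW NoK
def BStepQ : QT → QT → Prop := CtxQ BetaRootT BetaRootQ NoW NoK
def BStepW : WT → WT → Prop := CtxW BetaRootT BetaRootQ NoW NoK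
def BStepK : KT → KT → Prop := CtxK BetaRootT BetaRootQ NoW NoK

/-- One βη-reduction step, per sort. -/
def BERootT : TT → TT → Prop := fun a b => BetaRootT a b ∨ EtaRootT a b
def BEStepT : TT → TT → Prop := CtxT BERootT BetaRootQ EtaRootW EtaRootK
def BEStepQ : QT → QT → Prop := CtxQ BERootT BetaRootQ EtaRootW EtaRootK
def BEStepW : WT → WT → Prop := CtxW BERootT BetaRootQ EtaRootW EtaRootK
def BEStepK : KT → KT → Prop := CtxK BERootT BetaRootQ EtaRootW EtaRootK

/-! ## The inverse translation from the sorted target calculus into the CCV λμ-calculus -/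

mutual
def invT : TT → Tm
  | .lamK k q => .mu k (invQ q)
  | .app w1 w2 => .app (invW w1) (invW w2)
def invQ : QT → Jp
  | .kw K w => invK K (invW w)
  | .tk t K => invK K (invT t)
def invW : WT → Tm
  | .var x => .var x
  | .lam x t => .lam x (invT t)
/-- K⁻¹ is a jump with a single hole; `invK K M` fills the hole with `M`. -/
def invK : KT → Tm → Jp
  | .kvar k, M => .jmp k M
  | .lamQ x q, M => .lett (invQ q) x M
end

/-- β-type (non-η) steps on jumps. -/
def QStepJp : Jp → Jp → Prop := CtxJp QRootTm RootJp

/-- A term is quasi-normal if it contains no redex of the administrative or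
β-type rules (ad₁, ad₂, β_λ, β_let, β_μ, β_jmp); only η-type redices may
remain. -/
def QuasiTm (M : Tm) : Prop := ∀ M', ¬ QStepTm M M'
def QuasiJp (J : Jp) : Prop := ∀ J', ¬ QStepJp J J'

/-- β-normality in the sorted target calculus. -/
def BNormT (t : TT) : Prop := ∀ t', ¬ BStepT t t'
def BNormQ (q : QT) : Prop := ∀ q', ¬ BStepQ q q'
def BNormW (w : WT) : Prop := ∀ w', ¬ BStepW w w'

/-! By the grammar of β-normal forms, every application in a β-normal term has a variable in
function position and values as arguments, and every continuation variable is applied either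
to a value or to such an application; so the inverse translation creates no `ad₁`, `ad₂`,
`β_λ` or `β_jmp` redex. It creates no term-level `let` at all (a `λx.Q` continuation becomes a
let on jumps), so `β_let` and `β_μ` cannot fire either. -/

lemma quasiTm_var (x : ℕ) : QuasiTm (.var x) := by
  rintro _ (⟨⟨⟩⟩)

lemma QuasiTm.lam {M : Tm} (hM : QuasiTm M) (x : ℕ) : QuasiTm (.lam x M) := by
  intro _ h
  cases h with
  | root r => cases r
  | lam h => exact hM _ h

lemma QuasiJp.mu {J : Jp} (hJ : QuasiJp J) (k : ℕ) : QuasiTm (.mu k J) := by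
  intro _ h
  cases h with
  | root r => cases r
  | mu h => exact hJ _ h

lemma QuasiTm.app_var {V : Tm} (hV : QuasiTm V) (hVal : V.isVal) (y : ℕ) :
    QuasiTm (.app (.var y) V) := by
  intro _ h
  cases h with
  | root r =>
    cases r with
    | ad1 _ _ _ hNotVal => exact hNotVal trivial
    | ad2 _ _ _ _ hNotVal => exact hNotVal hVal
  | appL h => cases h with | root r => cases r
  | appR h => exact hV _ h

lemma QuasiJp.lett {J : Jp} {M : Tm} (hJ : QuasiJp J) (hM : QuasiTm M) (x : ℕ) :
    QuasiJp (.lett J x M) := by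
  intro _ h
  cases h with
  | root r => cases r
  | lettL h => exact hJ _ h
  | lettR h => exact hM _ h

lemma QuasiTm.jmp {M : Tm} (hM : QuasiTm M) (hNotMu : ∀ k J, M ≠ .mu k J) (l : ℕ) :
    QuasiJp (.jmp l M) := by
  intro _ h
  cases h with
  | root r => cases r; exact hNotMu _ _ rfl
  | jmp h => exact hM _ h

lemma invW_isVal (w : WT) : (invW w).isVal := by
  cases w <;> trivial

lemma invW_ne_mu (w : WT) (k : ℕ) (J : Jp) : invW w ≠ .mu k J := by
  cases w <;> simp [invW]

-- The grammars T_NF, Q_NF, W_NF, K_NF of β-normal forms.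
mutual
inductive NfT : TT → Prop
  | lamK {k q} : NfQ q → NfT (.lamK k q)
  | app {x w} : NfW w → NfT (.app (.var x) w)
inductive NfQ : QT → Prop
  | kvar {k w} : NfW w → NfQ (.kw (.kvar k) w)
  | app {x w K} : NfW w → NfK K → NfQ (.tk (.app (.var x) w) K)
inductive NfW : WT → Prop
  | var {x} : NfW (.var x)
  | lam {x t} : NfT t → NfW (.lam x t)
inductive NfK : KT → Prop
  | kvar {k} : NfK (.kvar k)
  | lamQ {x q} : NfQ q → NfK (.lamQ x q)
end

def BNormK (K : KT) : Prop := ∀ K', ¬ BStepK K K'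

mutual
theorem BNormT.nfT : ∀ {t : TT}, BNormT t → NfT t
  | .lamK _ _, h => .lamK (BNormQ.nfQ fun _ hq => h _ (CtxT.lamK hq))
  | .app (.var _) _, h => .app (BNormW.nfW fun _ hw => h _ (CtxT.appR hw))
  | .app (.lam x t) w, h => (h _ (CtxT.root (BetaRootT.beta x t w))).elim

theorem BNormQ.nfQ : ∀ {q : QT}, BNormQ q → NfQ q
  | .kw (.kvar _) _, h => .kvar (BNormW.nfW fun _ hw => h _ (CtxQ.kwR hw))
  | .kw (.lamQ x q) w, h => (h _ (CtxQ.root (BetaRootQ.betaK x q w))).elim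
  | .tk (.lamK k q) K, h => (h _ (CtxQ.root (BetaRootQ.betaT k q K))).elim
  | .tk (.app (.lam x t) w) _, h => (h _ (CtxQ.tkL (CtxT.root (BetaRootT.beta x t w)))).elim
  | .tk (.app (.var _) _) _, h =>
    .app (BNormW.nfW fun _ hw => h _ (CtxQ.tkL (CtxT.appR hw)))
      (BNormK.nfK fun _ hK => h _ (CtxQ.tkR hK))

theorem BNormW.nfW : ∀ {w : WT}, BNormW w → NfW w
  | .var _, _ => .var
  | .lam _ _, h => .lam (BNormT.nfT fun _ ht => h _ (CtxW.lam ht))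

theorem BNormK.nfK : ∀ {K : KT}, BNormK K → NfK K
  | .kvar _, _ => .kvar
  | .lamQ _ _, h => .lamQ (BNormQ.nfQ fun _ hq => h _ (CtxK.lamQ hq))
end

mutual
theorem NfT.quasiTm_invT : ∀ {t : TT}, NfT t → QuasiTm (invT t)
  | _, .lamK hq => hq.quasiJp_invQ.mu _
  | _, .app hw => hw.quasiTm_invW.app_var (invW_isVal _) _

theorem NfQ.quasiJp_invQ : ∀ {q : QT}, NfQ q → QuasiJp (invQ q)
  | _, .kvar hw => hw.quasiTm_invW.jmp (invW_ne_mu _) _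
  | _, .app hw hK =>
    hK.quasiJp_invK (hw.quasiTm_invW.app_var (invW_isVal _) _) nofun

theorem NfW.quasiTm_invW : ∀ {w : WT}, NfW w → QuasiTm (invW w)
  | _, .var => quasiTm_var _
  | _, .lam ht => ht.quasiTm_invT.lam _

theorem NfK.quasiJp_invK : ∀ {K : KT} {M : Tm}, NfK K → QuasiTm M →
    (∀ k J, M ≠ .mu k J) → QuasiJp (invK K M)
  | _, _, .kvar, hM, hNotMu => hM.jmp hNotMu _
  | _, _, .lamQ hq, hM, _ => hq.quasiJp_invQ.lett hM _
end

/-- The inverse translation of a β-normal term of the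
sorted target calculus is quasi-normal. -/
theorem inverse_of_beta_normal_is_quasi_normal :
    (∀ t : TT, BNormT t → QuasiTm (invT t)) ∧
    (∀ q : QT, BNormQ q → QuasiJp (invQ q)) ∧
    (∀ w : WT, BNormW w → QuasiTm (invW w)) :=
  ⟨fun _ h => h.nfT.quasiTm_invT, fun _ h => h.nfQ.quasiJp_invQ,
    fun _ h => h.nfW.quasiTm_invW⟩
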